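/- The conic Q: 4X_0^2 - X_1^2 + 2X_1X_3 + 3X_3^2 = 0 (as a quadric in P^3 together with the cubic F = X_0^3+X_1^3+X_2^3+X_0^2X_3+X_1X_3^2+X_3^3) defines a curve R_2 = {F = 0} ∩ {Q = 0} in P^3 that is smooth: at every common zero of F and Q over an algebraically closed field of characteristic zero, the Jacobian matrix of (F, Q) has rank 2. -/

import Mathlib

/-!
If the Jacobian of `(F, Q)` drops rank at a common zero `x ≠ 0`, then either `∇Q(x) = 0`, which
forces `x₀ = x₁ = x₃ = 0` (`Q` is a nondegenerate conic in `X₀, X₁, X₃`) and then `x₂ = 0` from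
`F(x) = x₂³`; or `∇F(x) = a ∇Q(x)`. Then the `X₂`-column gives `x₂ = 0`, and `(x₀ : x₁ : x₃)` is a
point where the plane conic `Q = 0` is tangent to the cubic `F(X₀, X₁, 0, X₃) = 0` (it lies on the
cubic by Euler's relation `3F = 2aQ`). The first coordinate gives `x₀ = 0` or `8a = 3x₀ + 2x₃`; on
each branch a reducible conic splits the point onto a line, on which the remaining equations
become binary quadratic forms with nonzero resultant, hence have no common nontrivial zero.
-/

theorem Matrix.rank_of_two_rows_eq_two {K n : Type*} [Field K] [Fintype n] {u v : n → K}
    (hv : v ≠ 0) (huv : ∀ a : K, a • v ≠ u) : (Matrix.of ![u, v]).rank = 2 :=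
  (linearIndependent_fin2.mpr ⟨hv, huv⟩).rank_matrix

namespace BranchCurve

variable {k : Type*} [Field k]

def gradF (x₀ x₁ x₂ x₃ : k) : Fin 4 → k :=
  ![3 * x₀ ^ 2 + 2 * x₀ * x₃, 3 * x₁ ^ 2 + x₃ ^ 2, 3 * x₂ ^ 2, x₀ ^ 2 + 2 * x₁ * x₃ + 3 * x₃ ^ 2]

def gradQ (x₀ x₁ x₃ : k) : Fin 4 → k :=
  ![8 * x₀, -2 * x₁ + 2 * x₃, 0, 2 * x₁ + 6 * x₃]

variable [CharZero k]

theorem eq_zero_of_gradQ_eq_zero {x₀ x₁ x₂ x₃ : k}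
    (hF : x₀ ^ 3 + x₁ ^ 3 + x₂ ^ 3 + x₀ ^ 2 * x₃ + x₁ * x₃ ^ 2 + x₃ ^ 3 = 0)
    (h : gradQ x₀ x₁ x₃ = 0) : x₀ = 0 ∧ x₁ = 0 ∧ x₂ = 0 ∧ x₃ = 0 := by
  have e₀ := congrFun h 0
  have e₁ := congrFun h 1
  have e₃ := congrFun h 3
  simp only [gradQ, Matrix.cons_val, Pi.zero_apply] at e₀ e₁ e₃
  have hx₀ : x₀ = 0 := by linear_combination e₀ / 8
  have hx₃ : x₃ = 0 := by linear_combination (e₁ + e₃) / 8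
  have hx₁ : x₁ = 0 := by linear_combination e₃ / 2 - 3 * hx₃
  subst hx₀ hx₁ hx₃
  exact ⟨rfl, rfl, pow_eq_zero_iff three_ne_zero |>.mp (by linear_combination hF), rfl⟩

theorem eq_zero_of_tangent_of_x₀_eq_zero {a x₁ x₃ : k}
    (hQ : -x₁ ^ 2 + 2 * x₁ * x₃ + 3 * x₃ ^ 2 = 0)
    (h₁ : 3 * x₁ ^ 2 + x₃ ^ 2 = a * (-2 * x₁ + 2 * x₃))
    (h₃ : 2 * x₁ * x₃ + 3 * x₃ ^ 2 = a * (2 * x₁ + 6 * x₃)) : x₁ = 0 ∧ x₃ = 0 := by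
  have hx₃ : x₃ = 0 := by
    have hlines : (x₁ - 3 * x₃) * (x₁ + x₃) = 0 := by linear_combination -hQ
    rcases mul_eq_zero.mp hlines with hl | hl
    · obtain rfl : x₁ = 3 * x₃ := by linear_combination hl
      exact pow_eq_zero_iff two_ne_zero |>.mp (by linear_combination (3 * h₁ + h₃) / 93)
    · obtain rfl : x₁ = -x₃ := by linear_combination hl
      exact pow_eq_zero_iff two_ne_zero |>.mp (by linear_combination (h₁ - h₃) / 3)
  subst hx₃
  exact ⟨pow_eq_zero_iff two_ne_zero |>.mp (by linear_combination -hQ), rfl⟩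

theorem eq_zero_of_three_conics {x₀ x₁ x₃ : k}
    (hQ : 4 * x₀ ^ 2 - x₁ ^ 2 + 2 * x₁ * x₃ + 3 * x₃ ^ 2 = 0)
    (hC : 12 * x₁ ^ 2 + 2 * x₃ ^ 2 + 3 * x₀ * x₁ - 3 * x₀ * x₃ + 2 * x₁ * x₃ = 0)
    (hD : 4 * x₀ ^ 2 + 6 * x₁ * x₃ + 6 * x₃ ^ 2 - 3 * x₀ * x₁ - 9 * x₀ * x₃ = 0) :
    x₀ = 0 ∧ x₁ = 0 ∧ x₃ = 0 := by
  have hlines : (x₁ + 3 * x₃) * (3 * x₀ - x₁ - x₃) = 0 := by linear_combination hQ - hD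
  rcases mul_eq_zero.mp hlines with hl | hl
  · obtain rfl : x₁ = -3 * x₃ := by linear_combination hl
    have hx₃ : x₃ = 0 := pow_eq_zero_iff three_ne_zero |>.mp <| by
      linear_combination (26 * x₃ + 3 * x₀) / 2596 * hC + 9 * x₃ / 2596 * hQ
    subst hx₃
    exact ⟨pow_eq_zero_iff two_ne_zero |>.mp (by linear_combination hQ / 4), by ring, rfl⟩
  · obtain rfl : x₁ = 3 * x₀ - x₃ := by linear_combination -hl
    have hx₀ : x₀ = 0 := pow_eq_zero_iff three_ne_zero |>.mp <| by
      linear_combination (67 * x₀ - 12 * x₃) / 1069 * hQ + 12 * x₀ / 1069 * hC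
    subst hx₀
    have hx₃ : x₃ = 0 := pow_eq_zero_iff two_ne_zero |>.mp (by linear_combination hC / 12)
    subst hx₃
    exact ⟨rfl, by ring, rfl⟩

theorem eq_zero_of_gradF_eq_smul_gradQ {a x₀ x₁ x₂ x₃ : k}
    (hQ : 4 * x₀ ^ 2 - x₁ ^ 2 + 2 * x₁ * x₃ + 3 * x₃ ^ 2 = 0)
    (h : a • gradQ x₀ x₁ x₃ = gradF x₀ x₁ x₂ x₃) : x₀ = 0 ∧ x₁ = 0 ∧ x₂ = 0 ∧ x₃ = 0 := by
  have h₀ := congrFun h 0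
  have h₁ := congrFun h 1
  have h₂ := congrFun h 2
  have h₃ := congrFun h 3
  simp only [gradF, gradQ, Matrix.cons_val, Pi.smul_apply, smul_eq_mul] at h₀ h₁ h₂ h₃
  have hx₂ : x₂ = 0 := pow_eq_zero_iff two_ne_zero |>.mp (by linear_combination -h₂ / 3)
  have hsplit : x₀ * (3 * x₀ + 2 * x₃ - 8 * a) = 0 := by linear_combination -h₀
  rcases mul_eq_zero.mp hsplit with hx₀ | ha
  · subst hx₀
    obtain ⟨hx₁, hx₃⟩ := eq_zero_of_tangent_of_x₀_eq_zero (a := a) (x₁ := x₁) (x₃ := x₃)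
      (by linear_combination hQ) (by linear_combination -h₁) (by linear_combination -h₃)
    exact ⟨rfl, hx₁, hx₂, hx₃⟩
  · obtain ⟨hx₀, hx₁, hx₃⟩ := eq_zero_of_three_conics hQ
      (by linear_combination -4 * h₁ + (x₁ - x₃) * ha)
      (by linear_combination -4 * h₃ - (x₁ + 3 * x₃) * ha)
    exact ⟨hx₀, hx₁, hx₂, hx₃⟩

end BranchCurve

theorem branch_curve_smooth_general {k : Type*} [Field k] [CharZero k]
    (x₀ x₁ x₂ x₃ : k) (hx : ¬ (x₀ = 0 ∧ x₁ = 0 ∧ x₂ = 0 ∧ x₃ = 0))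
    (hF : x₀ ^ 3 + x₁ ^ 3 + x₂ ^ 3 + x₀ ^ 2 * x₃ + x₁ * x₃ ^ 2 + x₃ ^ 3 = 0)
    (hQ : 4 * x₀ ^ 2 - x₁ ^ 2 + 2 * x₁ * x₃ + 3 * x₃ ^ 2 = 0) :
    Matrix.rank
      !![3 * x₀ ^ 2 + 2 * x₀ * x₃, 3 * x₁ ^ 2 + x₃ ^ 2, 3 * x₂ ^ 2,
           x₀ ^ 2 + 2 * x₁ * x₃ + 3 * x₃ ^ 2;
         8 * x₀, -2 * x₁ + 2 * x₃, 0, 2 * x₁ + 6 * x₃] = 2 :=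
  Matrix.rank_of_two_rows_eq_two
    (u := BranchCurve.gradF x₀ x₁ x₂ x₃) (v := BranchCurve.gradQ x₀ x₁ x₃)
    (fun h ↦ hx (BranchCurve.eq_zero_of_gradQ_eq_zero hF h))
    (fun _ h ↦ hx (BranchCurve.eq_zero_of_gradF_eq_smul_gradQ hQ h))

/-- The curve `R₂ = {F = 0} ∩ {Q = 0}` in `ℙ³`, where
`F = X₀³+X₁³+X₂³+X₀²X₃+X₁X₃²+X₃³` and `Q = 4X₀² - X₁² + 2X₁X₃ + 3X₃²`, is a smooth
complete intersection: at every nonzero common zero of `F` and `Q` over an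
algebraically closed field of characteristic zero, the 2×4 Jacobian matrix of
`(F, Q)` has rank 2. -/
theorem branch_curve_smooth {k : Type*} [Field k] [IsAlgClosed k] [CharZero k]
    (x₀ x₁ x₂ x₃ : k) (hx : ¬ (x₀ = 0 ∧ x₁ = 0 ∧ x₂ = 0 ∧ x₃ = 0))
    (hF : x₀ ^ 3 + x₁ ^ 3 + x₂ ^ 3 + x₀ ^ 2 * x₃ + x₁ * x₃ ^ 2 + x₃ ^ 3 = 0)
    (hQ : 4 * x₀ ^ 2 - x₁ ^ 2 + 2 * x₁ * x₃ + 3 * x₃ ^ 2 = 0) :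
    Matrix.rank
      !![3 * x₀ ^ 2 + 2 * x₀ * x₃, 3 * x₁ ^ 2 + x₃ ^ 2, 3 * x₂ ^ 2,
           x₀ ^ 2 + 2 * x₁ * x₃ + 3 * x₃ ^ 2;
         8 * x₀, -2 * x₁ + 2 * x₃, 0, 2 * x₁ + 6 * x₃] = 2 :=
  branch_curve_smooth_general x₀ x₁ x₂ x₃ hx hF hQ
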